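/- The maximum of R(ρ)/2 = (1/2)‖ρ − Γ(ρ)‖_tr over all density matrices ρ on ℂ^d equals 1 − 1/d, attained at the maximally coherent state |+⟩⟨+| with |+⟩ = (1/√d) Σ_i |i⟩. -/

import Mathlib

open Matrix BigOperators
open scoped Kronecker Matrix.Norms.L2Operator ComplexOrder

/-- Complete dephasing (classicalisation) map in the standard basis of `ℂ^d`. -/
noncomputable def dephase {d : ℕ} (ρ : Matrix (Fin d) (Fin d) ℂ) : Matrix (Fin d) (Fin d) ℂ :=
  Matrix.of fun i j => if i = j then ρ i j else 0

/-- Trace norm: sum of singular values, i.e. `tr √(AᴴA)`. -/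
noncomputable def traceNorm {n : Type} [Fintype n] [DecidableEq n] (A : Matrix n n ℂ) : ℝ :=
  (((Matrix.posSemidef_conjTranspose_mul_self A).1.eigenvectorUnitary.1 *
      diagonal (((↑) : ℝ → ℂ) ∘ (√·) ∘ (Matrix.posSemidef_conjTranspose_mul_self A).1.eigenvalues) *
      (star (Matrix.posSemidef_conjTranspose_mul_self A).1.eigenvectorUnitary :
        Matrix n n ℂ)).trace).re

/-- Dephasing on the first (system) factor of a bipartite space. -/
noncomputable def dephaseS {d m : ℕ} (ρ : Matrix (Fin d × Fin m) (Fin d × Fin m) ℂ) :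
    Matrix (Fin d × Fin m) (Fin d × Fin m) ℂ :=
  Matrix.of fun p q => if p.1 = q.1 then ρ p q else 0

/-- The maximally coherent state `|+⟩⟨+|` with `|+⟩ = (1/√d) Σ_i |i⟩`. -/
noncomputable def plusState (d : ℕ) : Matrix (Fin d) (Fin d) ℂ :=
  Matrix.of fun _ _ => (1 / (d : ℂ))

section Aux

open scoped MatrixOrder in
lemma traceNorm_eq_of' {n : Type} [Fintype n] [DecidableEq n] (A S : Matrix n n ℂ)
    (hS : S.PosSemidef) (h2 : S ^ 2 = Aᴴ * A) : traceNorm A = S.trace.re := by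
  unfold traceNorm
  have hS0 : 0 ≤ S := hS.nonneg
  have hA0 : 0 ≤ Aᴴ * A := (Matrix.posSemidef_conjTranspose_mul_self A).nonneg
  have hsq : CFC.sqrt (Aᴴ * A) = S := CFC.sqrt_unique (by rw [← h2, pow_two]) hS0
  rw [← hsq, CFC.sqrt_eq_cfc, cfc_nnreal_eq_real _ (Aᴴ * A),
    (Matrix.posSemidef_conjTranspose_mul_self A).1.cfc_eq]
  simp only [IsHermitian.cfc, Unitary.conjStarAlgAut_apply]
  unfold Real.sqrt
  rfl

lemma psd_smul' {n : Type} [Fintype n] {M : Matrix n n ℂ} (hM : M.PosSemidef) {c : ℝ}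
    (hc : 0 ≤ c) : ((c : ℂ) • M).PosSemidef := by
  refine Matrix.PosSemidef.of_dotProduct_mulVec_nonneg ?_ ?_
  · show ((c:ℂ) • M)ᴴ = _
    rw [conjTranspose_smul, hM.1]
    simp
  · intro x
    rw [Matrix.smul_mulVec, dotProduct_smul, smul_eq_mul]
    exact mul_nonneg (by exact_mod_cast hc) (hM.dotProduct_mulVec_nonneg x)

lemma psd_diag' {n : Type} [Fintype n] [DecidableEq n] {M : Matrix n n ℂ} (hM : M.PosSemidef)
    (i : n) : 0 ≤ M i i := by
  have := hM.dotProduct_mulVec_nonneg (Pi.single i 1)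
  simpa [dotProduct, mulVec, Pi.single_apply, Finset.sum_ite_eq, mul_ite] using this

lemma traceNorm_hermitian' {n : Type} [Fintype n] [DecidableEq n] {A : Matrix n n ℂ}
    (hA : A.IsHermitian) : traceNorm A = ∑ i, |hA.eigenvalues i| := by
  set V : Matrix n n ℂ := (hA.eigenvectorUnitary : Matrix n n ℂ) with hV
  have hVsV : Vᴴ * V = 1 := by
    rw [← Matrix.star_eq_conjTranspose]
    exact Matrix.mem_unitaryGroup_iff'.mp hA.eigenvectorUnitary.2
  have key : ∀ X Y : Matrix n n ℂ, (V*X*Vᴴ)*(V*Y*Vᴴ) = V*(X*Y)*Vᴴ := by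
    intro X Y
    rw [show (V*X*Vᴴ)*(V*Y*Vᴴ) = V*X*(Vᴴ*V)*Y*Vᴴ by simp only [Matrix.mul_assoc], hVsV,
      Matrix.mul_one]
    simp only [Matrix.mul_assoc]
  set D : Matrix n n ℂ := Matrix.diagonal (fun i => Complex.ofReal |hA.eigenvalues i|) with hD
  have hDpsd : D.PosSemidef := Matrix.PosSemidef.diagonal (fun i =>
    Complex.zero_le_real.mpr (abs_nonneg _))
  have hSpsd : (V * D * Vᴴ).PosSemidef := hDpsd.mul_mul_conjTranspose_same V
  have hAe : A = V * Matrix.diagonal (Complex.ofReal ∘ hA.eigenvalues) * Vᴴ := by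
    simpa [hV, Matrix.star_eq_conjTranspose] using hA.spectral_theorem
  have hsq : (V * D * Vᴴ) ^ 2 = Aᴴ * A := by
    rw [pow_two, key, hA.eq]
    conv_rhs => rw [hAe]
    rw [key, hD, Matrix.diagonal_mul_diagonal, Matrix.diagonal_mul_diagonal]
    congr 2
    funext i
    simp only [Function.comp_apply, ← Complex.ofReal_mul, abs_mul_abs_self]
  rw [traceNorm_eq_of' A _ hSpsd hsq, Matrix.trace_mul_cycle, hVsV, Matrix.one_mul, hD,
    Matrix.trace_diagonal]
  simp

lemma traceNorm_sub_le' {n : Type} [Fintype n] [DecidableEq n] {B C : Matrix n n ℂ}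
    (hB : B.PosSemidef) (hC : C.PosSemidef) :
    traceNorm (B - C) ≤ B.trace.re + C.trace.re := by
  have hA : (B - C).IsHermitian := hB.1.sub hC.1
  rw [traceNorm_hermitian' hA]
  set V : Matrix n n ℂ := (hA.eigenvectorUnitary : Matrix n n ℂ) with hV
  have hVsV : Vᴴ * V = 1 := by
    rw [← Matrix.star_eq_conjTranspose]
    exact Matrix.mem_unitaryGroup_iff'.mp hA.eigenvectorUnitary.2
  have hdiag : Vᴴ * (B - C) * V = Matrix.diagonal (Complex.ofReal ∘ hA.eigenvalues) := by
    rw [← Matrix.star_eq_conjTranspose]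
    simpa using hA.conjStarAlgAut_star_eigenvectorUnitary
  have hB' : (Vᴴ * B * V).PosSemidef := hB.conjTranspose_mul_mul_same V
  have hC' : (Vᴴ * C * V).PosSemidef := hC.conjTranspose_mul_mul_same V
  have hsplit : ∀ i, hA.eigenvalues i = ((Vᴴ * B * V) i i).re - ((Vᴴ * C * V) i i).re := by
    intro i
    have h1 : Vᴴ * B * V - Vᴴ * C * V = Vᴴ * (B - C) * V := by
      rw [Matrix.mul_sub, Matrix.sub_mul]
    have h2 := congrArg (fun M : Matrix n n ℂ => (M i i).re) (h1.trans hdiag)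
    simpa [Matrix.sub_apply, Matrix.diagonal_apply_eq] using h2.symm
  have htr : ∀ M : Matrix n n ℂ, (Vᴴ * M * V).trace = M.trace := by
    intro M
    rw [Matrix.trace_mul_cycle]
    have hVVs : V * Vᴴ = 1 := by
      rw [← Matrix.star_eq_conjTranspose]
      exact Matrix.mem_unitaryGroup_iff.mp hA.eigenvectorUnitary.2
    rw [hVVs, Matrix.one_mul]
  calc ∑ i, |hA.eigenvalues i|
      ≤ ∑ i, (((Vᴴ * B * V) i i).re + ((Vᴴ * C * V) i i).re) := by
        apply Finset.sum_le_sum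
        intro i _
        rw [hsplit i]
        have hb := psd_diag' hB' i
        have hc := psd_diag' hC' i
        have hbre : 0 ≤ ((Vᴴ * B * V) i i).re := by
          rw [Complex.le_def] at hb; simpa using hb.1
        have hcre : 0 ≤ ((Vᴴ * C * V) i i).re := by
          rw [Complex.le_def] at hc; simpa using hc.1
        calc |((Vᴴ * B * V) i i).re - ((Vᴴ * C * V) i i).re|
            ≤ |((Vᴴ * B * V) i i).re| + |((Vᴴ * C * V) i i).re| := abs_sub _ _
          _ = _ := by rw [abs_of_nonneg hbre, abs_of_nonneg hcre]
      _ = B.trace.re + C.trace.re := by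
        rw [Finset.sum_add_distrib]
        congr 1
        · rw [← htr B]; simp [Matrix.trace, Matrix.diag, Complex.re_sum]
        · rw [← htr C]; simp [Matrix.trace, Matrix.diag, Complex.re_sum]

lemma normSq_sum_le' {d : ℕ} (z : Fin d → ℂ) :
    Complex.normSq (∑ i, z i) ≤ d * ∑ i, Complex.normSq (z i) := by
  have h1 : ‖∑ i, z i‖ ≤ ∑ i, ‖z i‖ := norm_sum_le _ _
  have h2 : (∑ i, ‖z i‖) ^ 2 ≤
      (((Finset.univ (α := Fin d)).card : ℝ)) * ∑ i, ‖z i‖ ^ 2 :=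
    sq_sum_le_card_mul_sum_sq
  have h0 : Complex.normSq (∑ i, z i) = ‖∑ i, z i‖ ^ 2 := (Complex.sq_norm _).symm
  rw [h0]
  refine le_trans (pow_le_pow_left₀ (norm_nonneg _) h1 2) (le_trans h2 ?_)
  apply le_of_eq
  simp [Complex.sq_norm]

lemma dephase_hermitian' {d : ℕ} {ρ : Matrix (Fin d) (Fin d) ℂ} (hρ : ρ.IsHermitian) :
    (dephase ρ).IsHermitian := by
  ext i j
  simp only [Matrix.conjTranspose_apply, dephase, Matrix.of_apply]
  by_cases h : i = j
  · subst h
    simp only [if_pos rfl]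
    exact congrFun (congrFun hρ i) i
  · rw [if_neg (Ne.symm h), if_neg h, star_zero]

open scoped MatrixOrder in
lemma dephase_sub_psd' {d : ℕ} {ρ : Matrix (Fin d) (Fin d) ℂ} (hρ : ρ.PosSemidef) :
    (dephase ρ - ((d : ℂ))⁻¹ • ρ).PosSemidef := by
  obtain ⟨F, hF⟩ := CStarAlgebra.nonneg_iff_eq_star_mul_self.mp hρ.nonneg
  rw [Matrix.star_eq_conjTranspose] at hF
  refine Matrix.PosSemidef.of_dotProduct_mulVec_nonneg ?_ ?_
  · apply Matrix.IsHermitian.sub (dephase_hermitian' hρ.1)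
    show (((d:ℂ))⁻¹ • ρ)ᴴ = _
    rw [Matrix.conjTranspose_smul, hρ.1]
    congr 1
    simp
  · intro x
    have hdiag : ∀ i, ρ i i = ((∑ j, Complex.normSq (F j i) : ℝ) : ℂ) := by
      intro i
      rw [hF]
      simp [Matrix.mul_apply, Matrix.conjTranspose_apply, Complex.normSq_eq_conj_mul_self]
    have ht1 : star x ⬝ᵥ (dephase ρ *ᵥ x) =
        ((∑ i, ∑ j, Complex.normSq (x i) * Complex.normSq (F j i) : ℝ) : ℂ) := by
      have : ∀ i, (dephase ρ *ᵥ x) i = ρ i i * x i := by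
        intro i
        simp [Matrix.mulVec, dotProduct, dephase, Finset.sum_ite_eq, ite_mul]
      simp only [dotProduct, this, Pi.star_apply]
      push_cast
      apply Finset.sum_congr rfl
      intro i _
      rw [hdiag i]
      push_cast
      rw [Finset.sum_mul, Finset.mul_sum]
      apply Finset.sum_congr rfl
      intro j _
      rw [Complex.normSq_eq_conj_mul_self, Complex.normSq_eq_conj_mul_self, Complex.star_def]
      ring
    have ht2 : star x ⬝ᵥ (ρ *ᵥ x) = ((∑ j, Complex.normSq ((F *ᵥ x) j) : ℝ) : ℂ) := by
      rw [hF, ← Matrix.mulVec_mulVec, Matrix.dotProduct_mulVec, ← Matrix.star_mulVec]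
      simp [dotProduct, Complex.normSq_eq_conj_mul_self]
    rw [Matrix.sub_mulVec, dotProduct_sub, Matrix.smul_mulVec, dotProduct_smul,
      ht1, ht2, smul_eq_mul]
    have : ((d : ℂ))⁻¹ = ((((d:ℝ))⁻¹ : ℝ) : ℂ) := by push_cast; ring
    rw [this, ← Complex.ofReal_mul, ← Complex.ofReal_sub]
    rw [Complex.zero_le_real]
    rw [sub_nonneg]
    rcases Nat.eq_zero_or_pos d with hd0 | hd
    · subst hd0; simp
    have key : (∑ j, Complex.normSq ((F *ᵥ x) j)) ≤
        d * ∑ i, ∑ j, Complex.normSq (x i) * Complex.normSq (F j i) := by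
      have hj : ∀ j, Complex.normSq ((F *ᵥ x) j) ≤
          d * ∑ i, Complex.normSq (F j i) * Complex.normSq (x i) := by
        intro j
        have := normSq_sum_le' (fun i => F j i * x i)
        simpa [Matrix.mulVec, dotProduct, Complex.normSq_mul] using this
      calc (∑ j, Complex.normSq ((F *ᵥ x) j)) ≤
          ∑ j, d * ∑ i, Complex.normSq (F j i) * Complex.normSq (x i) :=
            Finset.sum_le_sum fun j _ => hj j
        _ = d * ∑ i, ∑ j, Complex.normSq (x i) * Complex.normSq (F j i) := by
            rw [← Finset.mul_sum, Finset.sum_comm]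
            congr 1
            apply Finset.sum_congr rfl
            intro i _
            apply Finset.sum_congr rfl
            intro j _
            ring
    rw [inv_mul_le_iff₀ (by positivity)]
    exact key

lemma plusState_psd' {d : ℕ} : (plusState d).PosSemidef := by
  refine Matrix.PosSemidef.of_dotProduct_mulVec_nonneg ?_ ?_
  · ext i j
    simp [plusState, Matrix.conjTranspose_apply, star_div₀]
  · intro x
    have h : star x ⬝ᵥ (plusState d *ᵥ x) =
        ((Complex.normSq (∑ i, x i) / d : ℝ) : ℂ) := by
      have e1 : star x ⬝ᵥ (plusState d *ᵥ x)
          = (∑ i, star (x i)) * ∑ j, 1/(d:ℂ) * x j := by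
        simp only [dotProduct, mulVec, plusState, Matrix.of_apply, Pi.star_apply]
        rw [← Finset.sum_mul]
      rw [e1, ← Finset.mul_sum]
      rw [show (∑ i, star (x i)) = (starRingEnd ℂ) (∑ i, x i) by
        rw [map_sum]; rfl]
      set s := ∑ i, x i
      rw [show (starRingEnd ℂ) s * (1/(d:ℂ) * s) = (1/(d:ℂ)) * ((starRingEnd ℂ) s * s) by ring,
        ← Complex.normSq_eq_conj_mul_self]
      push_cast
      ring
    rw [h]
    exact Complex.zero_le_real.mpr (div_nonneg (Complex.normSq_nonneg _) (Nat.cast_nonneg _))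

lemma plusState_trace' {d : ℕ} (hd : 0 < d) : (plusState d).trace = 1 := by
  simp only [Matrix.trace, Matrix.diag, plusState, Matrix.of_apply, Finset.sum_const,
    Finset.card_univ, Fintype.card_fin, nsmul_eq_mul]
  field_simp

lemma plus_traceNorm' {d : ℕ} (hd : 0 < d) :
    traceNorm (plusState d - dephase (plusState d)) = 2 - 2/(d:ℝ) := by
  rcases eq_or_lt_of_le (Nat.one_le_iff_ne_zero.mpr hd.ne') with hd1 | hd2
  · -- d = 1
    have hd1 : d = 1 := hd1.symm
    subst hd1
    have hA : plusState 1 - dephase (plusState 1) = 0 := by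
      ext i j
      fin_cases i; fin_cases j
      simp [plusState, dephase]
    rw [hA, traceNorm_eq_of' 0 0 Matrix.PosSemidef.zero (by simp [pow_two])]
    norm_num
  · -- d ≥ 2
    have hd2 : 2 ≤ d := hd2
    have hdC : (d : ℂ) ≠ 0 := Nat.cast_ne_zero.mpr hd.ne'
    have hdR : (0:ℝ) < d := Nat.cast_pos.mpr hd
    set a : ℝ := ((d:ℝ) - 2)/((d:ℝ)^2) with ha
    set b : ℝ := (1:ℝ)/(d:ℝ) with hb
    have hanneg : 0 ≤ a := by
      apply div_nonneg _ (by positivity)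
      have : (2:ℝ) ≤ d := by exact_mod_cast hd2
      linarith
    have hbnneg : 0 ≤ b := by positivity
    set S : Matrix (Fin d) (Fin d) ℂ :=
      Matrix.of (fun i j => (a:ℂ) + if i = j then (b:ℂ) else 0) with hSdef
    have hSpsd : S.PosSemidef := by
      refine Matrix.PosSemidef.of_dotProduct_mulVec_nonneg ?_ ?_
      · ext i j
        simp only [Matrix.conjTranspose_apply, hSdef, Matrix.of_apply]
        by_cases h : i = j
        · subst h
          simp [Complex.conj_ofReal]
        · simp [h, Ne.symm h, Complex.conj_ofReal]
      · intro x
        have hmv : ∀ i, (S *ᵥ x) i = (a:ℂ) * (∑ j, x j) + (b:ℂ) * x i := by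
          intro i
          simp only [mulVec, dotProduct, hSdef, Matrix.of_apply, add_mul, ite_mul, zero_mul,
            Finset.sum_add_distrib, Finset.sum_ite_eq, Finset.mem_univ, if_true, ← Finset.mul_sum]
        have key : star x ⬝ᵥ (S *ᵥ x) =
            ((a * Complex.normSq (∑ i, x i) + b * ∑ i, Complex.normSq (x i) : ℝ) : ℂ) := by
          have l1 : (∑ i, star (x i) * ((a:ℂ) * ∑ j, x j))
              = (a:ℂ) * ((Complex.normSq (∑ j, x j) : ℝ) : ℂ) := by
            rw [← Finset.sum_mul]
            rw [show (∑ i, star (x i)) = (starRingEnd ℂ) (∑ i, x i) by rw [map_sum]; rfl]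
            rw [show (starRingEnd ℂ) (∑ i, x i) * ((a:ℂ) * ∑ i, x i)
                = (a:ℂ) * ((starRingEnd ℂ) (∑ i, x i) * ∑ i, x i) by ring,
              ← Complex.normSq_eq_conj_mul_self]
          have l2 : (∑ i, star (x i) * ((b:ℂ) * x i))
              = (b:ℂ) * ((∑ i, Complex.normSq (x i) : ℝ) : ℂ) := by
            push_cast
            rw [Finset.mul_sum]
            apply Finset.sum_congr rfl
            intro i _
            rw [Complex.normSq_eq_conj_mul_self, Complex.star_def]
            ring
          simp only [dotProduct, hmv, Pi.star_apply, mul_add]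
          rw [Finset.sum_add_distrib, l1, l2]
          push_cast
          ring
        rw [key]
        refine Complex.zero_le_real.mpr ?_
        have hs : 0 ≤ ∑ i, Complex.normSq (x i) :=
          Finset.sum_nonneg fun i _ => Complex.normSq_nonneg _
        exact add_nonneg (mul_nonneg hanneg (Complex.normSq_nonneg _)) (mul_nonneg hbnneg hs)
    have hA : plusState d - dephase (plusState d) =
        Matrix.of (fun i j => (1/(d:ℂ)) - if i = j then (1/(d:ℂ)) else 0) := by
      ext i j
      simp [plusState, dephase, Matrix.sub_apply]
    have hsq : S ^ 2 = (plusState d - dephase (plusState d))ᴴ *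
        (plusState d - dephase (plusState d)) := by
      have hAH : (Matrix.of (fun i j => (1/(d:ℂ)) - if i = j then (1/(d:ℂ)) else 0) :
          Matrix (Fin d) (Fin d) ℂ)ᴴ =
          Matrix.of (fun i j => (1/(d:ℂ)) - if i = j then (1/(d:ℂ)) else 0) := by
        ext i j
        simp only [Matrix.conjTranspose_apply, Matrix.of_apply]
        by_cases h : i = j
        · subst h; simp
        · simp [h, Ne.symm h]
      rw [hA, hAH, pow_two]
      ext i j
      simp only [Matrix.mul_apply, Matrix.of_apply, hSdef, add_mul, mul_add, sub_mul, mul_sub,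
        ite_mul, mul_ite, mul_zero, zero_mul, Finset.sum_add_distrib, Finset.sum_sub_distrib,
        Finset.sum_ite_eq, Finset.sum_ite_eq', Finset.mem_univ, if_true, Finset.sum_const,
        Finset.card_univ, Fintype.card_fin, nsmul_eq_mul]
      rw [ha, hb]
      push_cast
      by_cases h : i = j
      · simp only [h, if_pos rfl]
        field_simp
        ring
      · simp only [if_neg h]
        field_simp
        ring
    rw [traceNorm_eq_of' _ S hSpsd hsq]
    have : S.trace = ((d * (a + b) : ℝ) : ℂ) := by
      simp only [Matrix.trace, Matrix.diag, hSdef, Matrix.of_apply, if_pos rfl,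
        Finset.sum_const, Finset.card_univ, Fintype.card_fin, nsmul_eq_mul]
      push_cast
      ring
    rw [this, Complex.ofReal_re, ha, hb]
    field_simp
    ring

end Aux

theorem max_vulnerability {d : ℕ} (hd : 0 < d) :
    IsGreatest {x : ℝ | ∃ ρ : Matrix (Fin d) (Fin d) ℂ,
        ρ.PosSemidef ∧ ρ.trace = 1 ∧ x = traceNorm (ρ - dephase ρ) / 2}
      (1 - 1 / (d : ℝ)) ∧
    traceNorm (plusState d - dephase (plusState d)) / 2 = 1 - 1 / (d : ℝ) := by
  have hdR : (0:ℝ) < d := Nat.cast_pos.mpr hd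
  have hval : traceNorm (plusState d - dephase (plusState d)) / 2 = 1 - 1 / (d : ℝ) := by
    rw [plus_traceNorm' hd]
    ring
  refine ⟨⟨⟨plusState d, plusState_psd', plusState_trace' hd, hval.symm⟩, ?_⟩, hval⟩
  rintro x ⟨ρ, hρ, htrρ, rfl⟩
  set B : Matrix (Fin d) (Fin d) ℂ := (((1 - 1/(d:ℝ) : ℝ)) : ℂ) • ρ with hBdef
  set C : Matrix (Fin d) (Fin d) ℂ := dephase ρ - ((d : ℂ))⁻¹ • ρ with hCdef
  have hBpsd : B.PosSemidef := psd_smul' hρ (by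
    have : 1/(d:ℝ) ≤ 1 := by
      rw [div_le_one hdR]
      exact_mod_cast hd
    linarith)
  have hCpsd : C.PosSemidef := dephase_sub_psd' hρ
  have hBC : ρ - dephase ρ = B - C := by
    rw [hBdef, hCdef]
    have hc : (((1 - 1/(d:ℝ) : ℝ)) : ℂ) = 1 - ((d:ℂ))⁻¹ := by
      push_cast
      ring
    rw [hc, sub_smul, one_smul]
    abel
  have htrB : B.trace.re = 1 - 1/(d:ℝ) := by
    rw [hBdef, Matrix.trace_smul, htrρ, smul_eq_mul, mul_one, Complex.ofReal_re]
  have htrC : C.trace.re = 1 - 1/(d:ℝ) := by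
    have hdep : (dephase ρ).trace = ρ.trace := by
      simp [Matrix.trace, Matrix.diag, dephase]
    rw [hCdef, Matrix.trace_sub, Matrix.trace_smul, hdep, htrρ, smul_eq_mul, mul_one]
    have : ((d : ℂ))⁻¹ = ((((d:ℝ))⁻¹ : ℝ) : ℂ) := by push_cast; ring
    rw [this]
    simp [Complex.sub_re, Complex.ofReal_re]
  have hle : traceNorm (ρ - dephase ρ) ≤ (1 - 1/(d:ℝ)) + (1 - 1/(d:ℝ)) := by
    rw [hBC]
    calc traceNorm (B - C) ≤ B.trace.re + C.trace.re := traceNorm_sub_le' hBpsd hCpsd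
      _ = _ := by rw [htrB, htrC]
  linarith
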